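/- Let g = so(2ℓ, ℂ) of type D_ℓ and let ĝ = g ⊗ ℂ[t, t⁻¹] ⊕ ℂK be the associated affine Lie algebra of level k = n − ℓ + 1 (n ∈ ℤ_{>0}), acting on the generalized Verma module N(k, 0) = U(ĝ) ⊗_{U(g⊗ℂ[t] ⊕ ℂK)} ℂ_k with vacuum vector 1. Then the vector v_n = (Σ_{i=2}^{ℓ} e_{ε_1−ε_i}(−1) e_{ε_1+ε_i}(−1))^n · 1 is a singular vector: e_{ε_j−ε_{j+1}}(0) v_n = 0 for j = 1, ..., ℓ−1, e_{ε_{ℓ-1}+ε_ℓ}(0) v_n = 0, and f_{ε_1+ε_2}(1) v_n = 0. -/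

import Mathlib

open Matrix Finset

/- `g = so(2ℓ, ℂ)` of type `D_ℓ` realized inside matrices indexed by `Fin ℓ ⊕ Fin ℓ`, with
Bourbaki root vectors as below. The normalized invariant form (with `κ(θ,θ) = 2` for the
highest root `θ = ε_1+ε_2`) is `κ(x,y) = tr(xy)/2` in this realization. A representation of the
affine Lie algebra `ĝ = g ⊗ ℂ[t,t⁻¹] ⊕ ℂK` of level `k` on a space `N` is encoded by linear
maps `act m : g →ₗ (N →ₗ N)` (`x(m) := act m x`) satisfying
`[x(m), y(m')] = [x,y](m+m') + m δ_{m+m',0} κ(x,y) k`, with `K` acting by the scalar `k`.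
The vacuum vector of the generalized Verma module `N(k,0)` is annihilated by all `x(m)`,
`m ≥ 0`. -/

noncomputable def Est (ℓ : ℕ) (a b : Fin ℓ ⊕ Fin ℓ) :
    Matrix (Fin ℓ ⊕ Fin ℓ) (Fin ℓ ⊕ Fin ℓ) ℂ :=
  Matrix.single a b 1

/-- root vector `e_{ε_i − ε_j}` (0-based indices) -/
noncomputable def eM (ℓ : ℕ) (i j : Fin ℓ) : Matrix (Fin ℓ ⊕ Fin ℓ) (Fin ℓ ⊕ Fin ℓ) ℂ :=
  Est ℓ (Sum.inl i) (Sum.inl j) - Est ℓ (Sum.inr j) (Sum.inr i)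

/-- root vector `e_{ε_i + ε_j}` (0-based indices) -/
noncomputable def eP (ℓ : ℕ) (i j : Fin ℓ) : Matrix (Fin ℓ ⊕ Fin ℓ) (Fin ℓ ⊕ Fin ℓ) ℂ :=
  Est ℓ (Sum.inl i) (Sum.inr j) - Est ℓ (Sum.inl j) (Sum.inr i)

/-- root vector `f_{ε_i + ε_j}` (0-based indices) -/
noncomputable def fP (ℓ : ℕ) (i j : Fin ℓ) : Matrix (Fin ℓ ⊕ Fin ℓ) (Fin ℓ ⊕ Fin ℓ) ℂ :=
  Est ℓ (Sum.inr j) (Sum.inl i) - Est ℓ (Sum.inr i) (Sum.inl j)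

/-! Put `Ω = Σ_{i ≥ 2} e_{ε₁-εᵢ}(-1) e_{ε₁+εᵢ}(-1)`, so that `v_n = Ωⁿ · 1`. The root vectors
`e_{εⱼ-εⱼ₊₁}(0)` and `e_{ε_{ℓ-1}+ε_ℓ}(0)` commute with `Ω` and kill the vacuum, hence kill `v_n`.
For `f = f_{ε₁+ε₂}(1)`, commuting `f` past one factor of `Ω` on `Ωᵐ · 1` leaves
`(k + ℓ - 2 - 2m) e_{ε₁-ε₂}(-1) Ωᵐ · 1`, and `e_{ε₁-ε₂}(-1)` commutes with `Ω`; summing up,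
`f Ωᵐ⁺¹ · 1 = (m + 1)(k + ℓ - 2 - m) e_{ε₁-ε₂}(-1) Ωᵐ · 1`, which vanishes for `m = n - 1`
exactly at the level `k = n - ℓ + 1`. -/

section RootVectors

variable {ℓ : ℕ}

lemma Est_mul_Est (a b c d : Fin ℓ ⊕ Fin ℓ) :
    Est ℓ a b * Est ℓ c d = if b = c then Est ℓ a d else 0 := by
  unfold Est
  split_ifs with h
  · rw [h, Matrix.single_mul_single_same, one_mul]
  · exact Matrix.single_mul_single_of_ne (c := 1) a b c h 1

lemma trace_Est (a b : Fin ℓ ⊕ Fin ℓ) : (Est ℓ a b).trace = if a = b then 1 else 0 := by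
  unfold Est
  split_ifs with h
  · rw [h, Matrix.trace_single_eq_same]
  · exact Matrix.trace_single_eq_of_ne a b 1 h

lemma lie_eM_eM (a b c d : Fin ℓ) :
    ⁅eM ℓ a b, eM ℓ c d⁆ = (if b = c then eM ℓ a d else 0) - (if d = a then eM ℓ c b else 0) := by
  simp only [Ring.lie_def, eM, sub_mul, mul_sub, Est_mul_Est, Sum.inl.injEq, Sum.inr.injEq,
    reduceCtorEq, if_false]
  split_ifs <;> subst_vars <;> first | contradiction | abel

lemma lie_eM_eP (a b c d : Fin ℓ) :
    ⁅eM ℓ a b, eP ℓ c d⁆ = (if b = c then eP ℓ a d else 0) + (if b = d then eP ℓ c a else 0) := by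
  simp only [Ring.lie_def, eM, eP, sub_mul, mul_sub, Est_mul_Est, Sum.inl.injEq, Sum.inr.injEq,
    reduceCtorEq, if_false]
  split_ifs <;> subst_vars <;> first | contradiction | abel

lemma lie_eP_eM (a b c d : Fin ℓ) :
    ⁅eP ℓ a b, eM ℓ c d⁆ = -(if d = a then eP ℓ c b else 0) - (if d = b then eP ℓ a c else 0) := by
  simp only [Ring.lie_def, eM, eP, sub_mul, mul_sub, Est_mul_Est, Sum.inl.injEq, Sum.inr.injEq,
    reduceCtorEq, if_false]
  split_ifs <;> subst_vars <;> first | contradiction | abel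

lemma eP_swap (a b : Fin ℓ) : eP ℓ a b = -eP ℓ b a := (neg_sub _ _).symm

@[simp]
lemma eP_self (a : Fin ℓ) : eP ℓ a a = 0 := sub_self _

lemma lie_eP_eP (a b c d : Fin ℓ) : ⁅eP ℓ a b, eP ℓ c d⁆ = 0 := by
  simp [Ring.lie_def, eP, sub_mul, mul_sub, Est_mul_Est]

lemma lie_fP_eM (a b c d : Fin ℓ) :
    ⁅fP ℓ a b, eM ℓ c d⁆ = (if a = c then fP ℓ d b else 0) - (if b = c then fP ℓ d a else 0) := by
  simp only [Ring.lie_def, fP, eM, sub_mul, mul_sub, Est_mul_Est, Sum.inl.injEq, Sum.inr.injEq,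
    reduceCtorEq, if_false]
  split_ifs <;> subst_vars <;> first | contradiction | abel

lemma lie_fP_eP (a b c d : Fin ℓ) :
    ⁅fP ℓ a b, eP ℓ c d⁆ = (if a = d then eM ℓ c b else 0) + (if b = c then eM ℓ d a else 0)
      - (if a = c then eM ℓ d b else 0) - (if b = d then eM ℓ c a else 0) := by
  simp only [Ring.lie_def, fP, eP, eM, sub_mul, mul_sub, Est_mul_Est, Sum.inl.injEq, Sum.inr.injEq]
  split_ifs <;> subst_vars <;> first | contradiction | abel

lemma trace_fP_mul_eM (a b c d : Fin ℓ) : (fP ℓ a b * eM ℓ c d).trace = 0 := by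
  simp only [fP, eM, sub_mul, mul_sub, Est_mul_Est, trace_sub, apply_ite trace, trace_Est,
    trace_zero]
  simp

lemma trace_fP_mul_eP (a b c d : Fin ℓ) :
    (fP ℓ a b * eP ℓ c d).trace
      = 2 * ((if a = c ∧ b = d then 1 else 0) - (if a = d ∧ b = c then 1 else 0)) := by
  simp only [fP, eP, sub_mul, mul_sub, Est_mul_Est, Sum.inl.injEq, trace_sub, apply_ite trace,
    trace_Est, trace_zero]
  split_ifs <;> simp_all <;> norm_num

end RootVectors

theorem Ring.lie_mul {A : Type*} [Ring A] (a b c : A) : ⁅a, b * c⁆ = ⁅a, b⁆ * c + b * ⁅a, c⁆ := by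
  simp only [Ring.lie_def]
  noncomm_ring

theorem Ring.lie_sum {A ι : Type*} [Ring A] (a : A) (s : Finset ι) (f : ι → A) :
    ⁅a, ∑ i ∈ s, f i⁆ = ∑ i ∈ s, ⁅a, f i⁆ := by
  simp only [Ring.lie_def, Finset.mul_sum, Finset.sum_mul, Finset.sum_sub_distrib]

section Endomorphisms

variable {R M : Type*} [CommRing R] [AddCommGroup M] [Module R M]

theorem Commute.apply_pow_apply_eq_zero {X Ω : Module.End R M} (h : Commute X Ω) {v : M}
    (hv : X v = 0) (m : ℕ) : X ((Ω ^ m) v) = 0 := by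
  rw [← Module.End.mul_apply, (h.pow_right m).eq, Module.End.mul_apply, hv, map_zero]

theorem apply_pow_apply_eq_smul_of_lie_eq_smul {X Ω : Module.End R M} {c : R} (h : ⁅X, Ω⁆ = c • Ω)
    {v : M} (hv : X v = 0) (m : ℕ) : X ((Ω ^ m) v) = ((m : R) * c) • (Ω ^ m) v := by
  induction m with
  | zero => simpa using hv
  | succ m ih =>
    have hX : X * Ω = Ω * X + c • Ω := by rw [← h, Ring.lie_def]; abel
    rw [pow_succ', Module.End.mul_apply, ← Module.End.mul_apply X, hX, LinearMap.add_apply,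
      Module.End.mul_apply, ih, LinearMap.smul_apply, map_smul, ← add_smul]
    push_cast
    ring_nf

theorem apply_pow_succ_apply_eq_smul_of_recursion {Ω E F : Module.End R M} {v : M} {c : R}
    (hE : Commute E Ω) (hv : F v = 0)
    (hrec : ∀ m : ℕ, F ((Ω ^ (m + 1)) v) = Ω (F ((Ω ^ m) v)) + (c - 2 * m) • E ((Ω ^ m) v))
    (m : ℕ) : F ((Ω ^ (m + 1)) v) = (((m : R) + 1) * (c - m)) • E ((Ω ^ m) v) := by
  induction m with
  | zero => rw [hrec 0]; simp [hv]
  | succ m ih =>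
    have hΩE : Ω (E ((Ω ^ m) v)) = E ((Ω ^ (m + 1)) v) := by
      rw [← Module.End.mul_apply, ← hE.eq, Module.End.mul_apply, pow_succ', Module.End.mul_apply]
    rw [hrec, ih, map_smul, hΩE, ← add_smul]
    push_cast
    ring_nf

end Endomorphisms

section AffineRep

variable {ℓ : ℕ} {N : Type*} [AddCommGroup N] [Module ℂ N]
  {act : ℤ → Matrix (Fin ℓ ⊕ Fin ℓ) (Fin ℓ ⊕ Fin ℓ) ℂ →ₗ[ℂ] Module.End ℂ N} {k : ℂ}

def IsAffineRep (act : ℤ → Matrix (Fin ℓ ⊕ Fin ℓ) (Fin ℓ ⊕ Fin ℓ) ℂ →ₗ[ℂ] Module.End ℂ N)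
    (k : ℂ) : Prop :=
  ∀ (m m' : ℤ) (x y : Matrix (Fin ℓ ⊕ Fin ℓ) (Fin ℓ ⊕ Fin ℓ) ℂ),
    ⁅act m x, act m' y⁆
      = act (m + m') ⁅x, y⁆ + (if m + m' = 0 then (m : ℂ) * ((x * y).trace / 2) * k else 0) • 1

noncomputable def omegaOp (act : ℤ → Matrix (Fin ℓ ⊕ Fin ℓ) (Fin ℓ ⊕ Fin ℓ) ℂ →ₗ[ℂ] Module.End ℂ N)
    (z : Fin ℓ) : Module.End ℂ N :=
  ∑ i ∈ univ.erase z, act (-1) (eM ℓ z i) * act (-1) (eP ℓ z i)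

namespace IsAffineRep

variable (hrep : IsAffineRep act k)
include hrep

theorem lie_act_of_add_ne_zero {m m' : ℤ} (h : m + m' ≠ 0) (x y) :
    ⁅act m x, act m' y⁆ = act (m + m') ⁅x, y⁆ := by
  simpa [h] using hrep m m' x y

theorem lie_act_one_neg_one (x y) :
    ⁅act 1 x, act (-1) y⁆ = act 0 ⁅x, y⁆ + ((x * y).trace / 2 * k) • 1 := by
  simpa using hrep 1 (-1) x y

theorem act_zero_act_neg_one_apply (x y) (w : N) :
    act 0 x (act (-1) y w) = act (-1) y (act 0 x w) + act (-1) ⁅x, y⁆ w := by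
  have h := hrep.lie_act_of_add_ne_zero (m := 0) (m' := -1) (by norm_num) x y
  rw [Ring.lie_def, zero_add] at h
  exact eq_add_of_sub_eq' (congrArg (· w) h)

theorem commute_act_neg_one {x y} (h : ⁅x, y⁆ = 0) : Commute (act (-1) x) (act (-1) y) := by
  rw [commute_iff_lie_eq, hrep.lie_act_of_add_ne_zero (by norm_num), h, map_zero]

theorem lie_act_omegaOp {m : ℤ} (hm : m ≠ 1) (x) (z : Fin ℓ) :
    ⁅act m x, omegaOp act z⁆ = ∑ i ∈ univ.erase z,
      (act (m - 1) ⁅x, eM ℓ z i⁆ * act (-1) (eP ℓ z i)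
        + act (-1) (eM ℓ z i) * act (m - 1) ⁅x, eP ℓ z i⁆) := by
  have hm' : m + -1 ≠ 0 := by omega
  simp only [omegaOp, Ring.lie_sum, Ring.lie_mul, hrep.lie_act_of_add_ne_zero hm', ← sub_eq_add_neg]

theorem commute_act_zero_eM_omegaOp {a b z : Fin ℓ} (hb : b ≠ z) :
    Commute (act 0 (eM ℓ a b)) (omegaOp act z) := by
  rw [commute_iff_lie_eq, hrep.lie_act_omegaOp zero_ne_one]
  by_cases ha : a = z <;>
    simp [lie_eM_eM, lie_eM_eP, hb, ha, apply_ite (act (-1)), ite_mul, mul_ite,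
      Finset.sum_add_distrib]

theorem commute_act_zero_eP_omegaOp {p q z : Fin ℓ} (hp : p ≠ z) (hq : q ≠ z) :
    Commute (act 0 (eP ℓ p q)) (omegaOp act z) := by
  rw [commute_iff_lie_eq, hrep.lie_act_omegaOp zero_ne_one]
  simp only [zero_sub, Int.reduceNeg, lie_eP_eM, eP_swap p z, map_sub, map_neg,
    apply_ite (act (-1)), map_zero, sub_mul, neg_mul, ite_mul, zero_mul, lie_eP_eP, mul_zero,
    add_zero, sum_sub_distrib, sum_neg_distrib, sum_ite_eq', mem_erase, ne_eq, hp, hq,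
    not_false_eq_true, mem_univ, and_self, ↓reduceIte, sub_neg_eq_add]
  rw [(hrep.commute_act_neg_one (lie_eP_eP z p z q)).eq]
  abel

theorem commute_act_zero_fP_omegaOp {a b z : Fin ℓ} (ha : a ≠ z) (hb : b ≠ z) :
    Commute (act 0 (fP ℓ a b)) (omegaOp act z) := by
  rw [commute_iff_lie_eq, hrep.lie_act_omegaOp zero_ne_one]
  simp only [zero_sub, Int.reduceNeg, lie_fP_eM, ha, hb, ↓reduceIte, sub_self, map_zero,
    zero_mul, lie_fP_eP, add_zero, sub_zero, map_sub, apply_ite (act (-1)), mul_sub, mul_ite,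
    mul_zero, zero_add, sum_sub_distrib, sum_ite_eq, mem_erase, ne_eq, not_false_eq_true,
    mem_univ, and_self]
  rw [(hrep.commute_act_neg_one (by simp [lie_eM_eM, ha, hb] : ⁅eM ℓ z a, eM ℓ z b⁆ = 0)).eq]
  abel

theorem commute_act_neg_one_eM_omegaOp {a z : Fin ℓ} (ha : a ≠ z) :
    Commute (act (-1) (eM ℓ z a)) (omegaOp act z) := by
  rw [commute_iff_lie_eq, hrep.lie_act_omegaOp (by norm_num)]
  refine Finset.sum_eq_zero fun i hi => ?_
  simp [lie_eM_eM, lie_eM_eP, ha, (Finset.ne_of_mem_erase hi)]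

theorem lie_act_zero_eM_self_omegaOp (z : Fin ℓ) :
    ⁅act 0 (eM ℓ z z), omegaOp act z⁆ = (2 : ℂ) • omegaOp act z := by
  rw [hrep.lie_act_omegaOp zero_ne_one, omegaOp, Finset.smul_sum]
  refine Finset.sum_congr rfl fun i hi => ?_
  simp [lie_eM_eM, lie_eM_eP, (Finset.ne_of_mem_erase hi), two_smul]

theorem act_one_fP_omegaOp_apply {z o : Fin ℓ} (ho : o ≠ z) {w : N} {c : ℂ}
    (hM : ∀ i, act 0 (eM ℓ i o) w = 0) (hF : ∀ i ≠ z, act 0 (fP ℓ i o) w = 0)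
    (hH : act 0 (eM ℓ z z) w = c • w) :
    act 1 (fP ℓ z o) (omegaOp act z w)
      = omegaOp act z (act 1 (fP ℓ z o) w) + (k + ℓ - 2 - c) • act (-1) (eM ℓ z o) w := by
  set F := act 1 (fP ℓ z o)
  have hA : ∀ i, ⁅F, act (-1) (eM ℓ z i)⁆ = act 0 (fP ℓ i o) := by
    simp [F, hrep.lie_act_one_neg_one, lie_fP_eM, trace_fP_mul_eM, ho]
  have hB : ∀ i ≠ z, ⁅F, act (-1) (eP ℓ z i)⁆ w = if i = o then (k - c) • w else 0 := by
    intro i hi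
    by_cases hio : i = o
    · subst hio
      simp [F, hrep.lie_act_one_neg_one, lie_fP_eP, trace_fP_mul_eP, hi, hi.symm, hM, hH]
      module
    · simp [F, hrep.lie_act_one_neg_one, lie_fP_eP, trace_fP_mul_eP, hi.symm, hM, hio,
        Ne.symm hio, ho]
  have hterm : ∀ i ∈ univ.erase z,
      (⁅F, act (-1) (eM ℓ z i)⁆ * act (-1) (eP ℓ z i)
        + act (-1) (eM ℓ z i) * ⁅F, act (-1) (eP ℓ z i)⁆) w
      = (1 + if i = o then k - c - 1 else 0) • act (-1) (eM ℓ z o) w := by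
    intro i hi
    have hiz := Finset.ne_of_mem_erase hi
    rw [LinearMap.add_apply, Module.End.mul_apply, Module.End.mul_apply, hA, hB i hiz,
      hrep.act_zero_act_neg_one_apply, hF i hiz, map_zero, zero_add, lie_fP_eP]
    by_cases hio : i = o
    · subst hio
      simp
    · simp [hio, Ne.symm hio, hiz, ho]
  have hlie : ⁅F, omegaOp act z⁆ w = (k + ℓ - 2 - c) • act (-1) (eM ℓ z o) w := by
    rw [omegaOp, Ring.lie_sum, LinearMap.sum_apply]
    simp only [Ring.lie_mul]
    rw [Finset.sum_congr rfl hterm, ← Finset.sum_smul, Finset.sum_add_distrib, Finset.sum_const,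
      Finset.sum_ite_eq', if_pos (Finset.mem_erase.2 ⟨ho, Finset.mem_univ o⟩),
      Finset.card_erase_of_mem (Finset.mem_univ z), Finset.card_univ, Fintype.card_fin]
    rw [nsmul_eq_mul, mul_one, Nat.cast_sub z.pos, Nat.cast_one]
    congr 1
    ring
  rw [← sub_eq_iff_eq_add', ← hlie, Ring.lie_def]
  rfl

theorem act_one_fP_omegaOp_pow_succ_apply {z o : Fin ℓ} (ho : o ≠ z) {vac : N}
    (hvac : ∀ m : ℤ, 0 ≤ m → ∀ x, act m x vac = 0) (m : ℕ) :
    act 1 (fP ℓ z o) ((omegaOp act z ^ (m + 1)) vac)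
      = (((m : ℂ) + 1) * (k + ℓ - 2 - m)) • act (-1) (eM ℓ z o) ((omegaOp act z ^ m) vac) := by
  refine apply_pow_succ_apply_eq_smul_of_recursion (hrep.commute_act_neg_one_eM_omegaOp ho)
    (hvac 1 zero_le_one _) (fun m => ?_) m
  have hvac0 := hvac 0 le_rfl
  have hH := apply_pow_apply_eq_smul_of_lie_eq_smul (hrep.lie_act_zero_eM_self_omegaOp z)
    (hvac0 _) m
  rw [pow_succ', Module.End.mul_apply, hrep.act_one_fP_omegaOp_apply ho
    (fun i => (hrep.commute_act_zero_eM_omegaOp ho).apply_pow_apply_eq_zero (hvac0 _) m)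
    (fun i hi => (hrep.commute_act_zero_fP_omegaOp hi ho).apply_pow_apply_eq_zero (hvac0 _) m)
    hH]
  congr 2
  ring

end IsAffineRep

end AffineRep

/-- in any representation of the affine Lie algebra `ĝ` of type `D_ℓ^{(1)}` of
level `k = n − ℓ + 1` (`n ∈ ℤ_{>0}`) with a vacuum vector annihilated by `g ⊗ ℂ[t] ⊕ ℂK`
(K acting by `k`) — in particular in the generalized Verma module `N(k, 0)` — the vector
`v_n = (Σ_{i=2}^{ℓ} e_{ε_1−ε_i}(−1) e_{ε_1+ε_i}(−1))^n · 1` is a singular vector: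
`e_{ε_j−ε_{j+1}}(0) v_n = 0` for `j = 1, ..., ℓ−1`, `e_{ε_{ℓ-1}+ε_ℓ}(0) v_n = 0`, and
`f_{ε_1+ε_2}(1) v_n = 0`. -/
theorem stmt10_singular_vector_vn
    (ℓ n : ℕ) (hℓ : 3 ≤ ℓ) (hn : 0 < n)
    (N : Type*) [AddCommGroup N] [Module ℂ N]
    (act : ℤ → Matrix (Fin ℓ ⊕ Fin ℓ) (Fin ℓ ⊕ Fin ℓ) ℂ →ₗ[ℂ] Module.End ℂ N)
    (k : ℂ) (hk : k = (n : ℂ) - (ℓ : ℂ) + 1)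
    (hcomm : ∀ (m m' : ℤ) (x y : Matrix (Fin ℓ ⊕ Fin ℓ) (Fin ℓ ⊕ Fin ℓ) ℂ) (w : N),
      act m x (act m' y w) - act m' y (act m x w)
        = act (m + m') ⁅x, y⁆ w
          + (if m + m' = 0 then (m : ℂ) * ((x * y).trace / 2) * k else 0) • w)
    (vac : N) (hvac : ∀ m : ℤ, 0 ≤ m → ∀ x, act m x vac = 0) :
    ∀ v : N,
      v = ((∑ i ∈ univ.filter (fun i : Fin ℓ => (i : ℕ) ≠ 0),
              (act (-1) (eM ℓ ⟨0, by omega⟩ i)) * (act (-1) (eP ℓ ⟨0, by omega⟩ i))) ^ n) vac →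
      ((∀ (j : ℕ) (hj : j + 1 < ℓ), act 0 (eM ℓ ⟨j, by omega⟩ ⟨j + 1, hj⟩) v = 0) ∧
       act 0 (eP ℓ ⟨ℓ - 2, by omega⟩ ⟨ℓ - 1, by omega⟩) v = 0 ∧
       act 1 (fP ℓ ⟨0, by omega⟩ ⟨1, by omega⟩) v = 0) := by
  intro v hv
  have hrep : IsAffineRep act k := fun m m' x y =>
    LinearMap.ext fun w => by
      simp only [Ring.lie_def (act m x), LinearMap.sub_apply, Module.End.mul_apply,
        LinearMap.add_apply, LinearMap.smul_apply, Module.End.one_apply]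
      exact hcomm m m' x y w
  have hfilter : univ.filter (fun i : Fin ℓ => (i : ℕ) ≠ 0) = univ.erase ⟨0, by omega⟩ := by
    ext i
    simp [Fin.ext_iff]
  rw [hfilter] at hv
  change v = (omegaOp act ⟨0, by omega⟩ ^ n) vac at hv
  have hvac0 := hvac 0 le_rfl
  subst hv
  refine ⟨fun j hj => ?_, ?_, ?_⟩
  · exact (hrep.commute_act_zero_eM_omegaOp (by simp [Fin.ext_iff])).apply_pow_apply_eq_zero
      (hvac0 _) n
  · exact (hrep.commute_act_zero_eP_omegaOp (by simp [Fin.ext_iff]; omega)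
      (by simp [Fin.ext_iff]; omega)).apply_pow_apply_eq_zero (hvac0 _) n
  · obtain ⟨m, rfl⟩ := Nat.exists_eq_add_of_lt hn
    have hlevel : k + ℓ - 2 - (m : ℂ) = 0 := by rw [hk]; push_cast; ring
    rw [zero_add, hrep.act_one_fP_omegaOp_pow_succ_apply (by simp [Fin.ext_iff]) hvac, hlevel,
      mul_zero, zero_smul]
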